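/- Let 𝒫 be a weak parallelogram structure on a nonempty set X, with base B, basepoint i ∈ X and π: X → B defined by π(x) = ⟨i,x⟩. For x,y ∈ X the following are equivalent: (1) (x,x,x,y) ∈ 𝒫; (2) π(x) = π(y); (3) ⟨x,y⟩ = 1_B; (4) for all a,b,c ∈ X with (a,b,c,x) ∈ 𝒫 one has (a,b,c,y) ∈ 𝒫; (5) there exist a,b,c ∈ X with (a,b,c,x) ∈ 𝒫 and (a,b,c,y) ∈ 𝒫. -/

import Mathlib

open scoped Pointwise

namespace HK

/-- Quadruples of elements of `X`, indexed by the vertices `00, 01, 10, 11` of the square. -/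
abbrev Quad (X : Type) := X × X × X × X

/-- Vertices of the cube `{0,1}³`. -/
abbrev Vtx := Fin 3 → Bool

/-- Elements of `X^{[3]} = X⁸`, indexed by the vertices of the cube. -/
abbrev Cube (X : Type) := Vtx → X

variable {X Y : Type}

/-- Apply a map coordinatewise to a quadruple. -/
def map4 (f : X → Y) (p : Quad X) : Quad Y := (f p.1, f p.2.1, f p.2.2.1, f p.2.2.2)

/-- Apply a map coordinatewise to a cube. -/
def mapCube (f : X → Y) (x : Cube X) : Cube Y := fun v => f (x v)

/-- A weak parallelogram structure: the relation `(x00,x01) ∼ (x10,x11) ↔ (x00,x01,x10,x11) ∈ P`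
is an equivalence relation, `P` is invariant under exchanging the two middle entries, and
any three points can be completed to a parallelogram. -/
def IsWeakParallelogram (P : Set (Quad X)) : Prop :=
  (∀ a b : X, (a, b, a, b) ∈ P) ∧
  (∀ a b c d : X, (a, b, c, d) ∈ P → (c, d, a, b) ∈ P) ∧
  (∀ a b c d e f : X, (a, b, c, d) ∈ P → (c, d, e, f) ∈ P → (a, b, e, f) ∈ P) ∧
  (∀ a b c d : X, (a, b, c, d) ∈ P → (a, c, b, d) ∈ P) ∧
  (∀ a b c : X, ∃ d, (a, b, c, d) ∈ P)

/-- A strong parallelogram structure: the completing fourth point is unique. -/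
def IsStrongParallelogram (P : Set (Quad X)) : Prop :=
  IsWeakParallelogram P ∧ ∀ a b c : X, ∃! d, (a, b, c, d) ∈ P

/-- The entry of a quadruple at a vertex of the square. -/
def quadAt (p : Quad X) : Bool → Bool → X
  | false, false => p.1
  | false, true => p.2.1
  | true, false => p.2.2.1
  | true, true => p.2.2.2

/-- The cube whose face `ε₁ = 0` is `p` and whose face `ε₁ = 1` is `q`. -/
def joinQuad (p q : Quad X) : Cube X :=
  fun v => if v 0 = false then quadAt p (v 1) (v 2) else quadAt q (v 1) (v 2)

/-- The vertex of the cube with value `b` at coordinate `i` and values `u,v` at the two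
remaining coordinates, taken in increasing order. -/
def insert3 (i : Fin 3) (b u v : Bool) : Vtx :=
  if i = 0 then ![b, u, v] else if i = 1 then ![u, b, v] else ![u, v, b]

/-- The face `{v : v i = b}` of a cube, as a quadruple in lexicographic order. -/
def face (x : Cube X) (i : Fin 3) (b : Bool) : Quad X :=
  (x (insert3 i b false false), x (insert3 i b false true),
   x (insert3 i b true false), x (insert3 i b true true))

/-- The permutations of the vertices of the cube induced by Euclidean isometries of the unit
cube: a permutation of the three coordinates composed with flips of some coordinates. -/
def cubeSym (σ : Equiv.Perm (Fin 3)) (c : Vtx) (v : Vtx) : Vtx :=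
  fun j => xor (v (σ j)) (c j)

/-- A weak parallelepiped structure `(P, Q)`: every face of an element of `Q` lies in `P`;
`Q` is invariant under the Euclidean permutations of the cube; the relation `≈` on `P`
(`p ≈ q ↔ joinQuad p q ∈ Q`) is an equivalence relation; and seven points whose three
determined faces lie in `P` can be completed to an element of `Q`. -/
def IsWeakParallelepiped (P : Set (Quad X)) (Q : Set (Cube X)) : Prop :=
  IsWeakParallelogram P ∧
  (∀ x ∈ Q, ∀ (i : Fin 3) (b : Bool), face x i b ∈ P) ∧
  (∀ (σ : Equiv.Perm (Fin 3)) (c : Vtx), ∀ x ∈ Q, (fun v => x (cubeSym σ c v)) ∈ Q) ∧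
  (∀ p ∈ P, joinQuad p p ∈ Q) ∧
  (∀ p q : Quad X, joinQuad p q ∈ Q → joinQuad q p ∈ Q) ∧
  (∀ p q r : Quad X, joinQuad p q ∈ Q → joinQuad q r ∈ Q → joinQuad p r ∈ Q) ∧
  (∀ x000 x001 x010 x011 x100 x101 x110 : X,
    (x000, x001, x010, x011) ∈ P → (x000, x010, x100, x110) ∈ P →
    (x000, x001, x100, x101) ∈ P →
    ∃ x111, joinQuad (x000, x001, x010, x011) (x100, x101, x110, x111) ∈ Q)

/-- A strong parallelepiped structure: the completing eighth point is unique. -/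
def IsStrongParallelepiped (P : Set (Quad X)) (Q : Set (Cube X)) : Prop :=
  IsWeakParallelepiped P Q ∧
  ∀ x000 x001 x010 x011 x100 x101 x110 : X,
    (x000, x001, x010, x011) ∈ P → (x000, x010, x100, x110) ∈ P →
    (x000, x001, x100, x101) ∈ P →
    ∃! x111, joinQuad (x000, x001, x010, x011) (x100, x101, x110, x111) ∈ Q

/-- The setoid on `X²` given by the parallelogram relation `∼`. -/
def baseSetoid (P : Set (Quad X)) (hP : IsWeakParallelogram P) : Setoid (X × X) where
  r p q := (p.1, p.2, q.1, q.2) ∈ P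
  iseqv := ⟨fun p => hP.1 p.1 p.2,
            fun h => hP.2.1 _ _ _ _ h,
            fun h h' => hP.2.2.1 _ _ _ _ _ _ h h'⟩

/-- The base `B = X²/∼` of a weak parallelogram structure. -/
def Base (P : Set (Quad X)) (hP : IsWeakParallelogram P) : Type := Quotient (baseSetoid P hP)

/-- The class `⟨x,y⟩ ∈ B` of a pair `(x,y)`. -/
def cls (P : Set (Quad X)) (hP : IsWeakParallelogram P) (x y : X) : Base P hP :=
  Quotient.mk (baseSetoid P hP) (x, y)

/-- The Gowers-type sum over parallelograms attached to a finitely supported `f : X → ℂ`. -/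
noncomputable def gSum2 (P : Set (Quad X)) (f : X →₀ ℂ) : ℂ :=
  ∑ᶠ q ∈ P, f q.1 * (starRingEnd ℂ) (f q.2.1) * (starRingEnd ℂ) (f q.2.2.1) * f q.2.2.2

/-- The seminorm `‖f‖_P = (gSum2 P f)^{1/4}`. -/
noncomputable def pNorm (P : Set (Quad X)) (f : X →₀ ℂ) : ℝ :=
  (gSum2 P f).re ^ ((1 : ℝ) / 4)

/-- `C^{|ε|} z`: conjugate `z` when the vertex `v` has an odd number of `1` entries. -/
noncomputable def cConjFactor (v : Vtx) (z : ℂ) : ℂ :=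
  if xor (v 0) (xor (v 1) (v 2)) then (starRingEnd ℂ) z else z

/-- The Gowers-type sum over parallelepipeds attached to a finitely supported `f : X → ℂ`. -/
noncomputable def gSum3 (Q : Set (Cube X)) (f : X →₀ ℂ) : ℂ :=
  ∑ᶠ x ∈ Q, ∏ v : Vtx, cConjFactor v (f (x v))

/-- The seminorm `‖f‖_Q = (gSum3 Q f)^{1/8}`. -/
noncomputable def qNorm (Q : Set (Cube X)) (f : X →₀ ℂ) : ℝ :=
  (gSum3 Q f).re ^ ((1 : ℝ) / 8)

/-- The structure group of a parallelepiped structure, as a set of bijections of `X`: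
those `g` mapping every parallelogram to an equivalent parallelogram. -/
def structSet (P : Set (Quad X)) (Q : Set (Cube X)) : Set (Equiv.Perm X) :=
  {g | ∀ p ∈ P, map4 g p ∈ P ∧ joinQuad (map4 g p) p ∈ Q}

/-- `x` and `y` lie in the same fiber of `π : X → B`, `π(x) = ⟨i,x⟩`. -/
def sameFiber (P : Set (Quad X)) (i x y : X) : Prop := (i, x, i, y) ∈ P

/-- A vertical quadruple: all four points lie in one fiber. -/
def VerticalQ (P : Set (Quad X)) (i : X) (w : Quad X) : Prop :=
  sameFiber P i w.1 w.2.1 ∧ sameFiber P i w.2.1 w.2.2.1 ∧ sameFiber P i w.2.2.1 w.2.2.2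

/-- `y = u·x` where `u = [w]` is the class of the vertical parallelogram `w`:
`(x,x,x,y)` is a parallelogram equivalent to `w`. -/
def actsRel (P : Set (Quad X)) (Q : Set (Cube X)) (w : Quad X) (x y : X) : Prop :=
  (x, x, x, y) ∈ P ∧ joinQuad (x, x, x, y) w ∈ Q

section Groups

variable (G : Type) [Group G]

/-- The diagonal embedding `G → G^{[2]}`. -/
def diagHom2 : G →* Quad G where
  toFun g := (g, g, g, g)
  map_one' := rfl
  map_mul' _ _ := rfl

/-- The diagonal embedding `G → G^{[3]}`. -/
def diagHom3 : G →* Cube G where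
  toFun g := fun _ => g
  map_one' := rfl
  map_mul' _ _ := rfl

/-- The two dimensional edge group `G^{[2,1]}`. -/
def edgeGroup2 : Subgroup (Quad G) :=
  Subgroup.closure
    {q : Quad G | ∃ g : G, q = (g, g, 1, 1) ∨ q = (g, 1, g, 1) ∨ q = (g, g, g, g)}

/-- The second commutator subgroup `G₃ = [G, G₂]`. -/
def secondCommutator : Subgroup G := ⁅(⊤ : Subgroup G), commutator G⁆

variable {G}

/-- The edge group `F^{[2,1]}` of a subgroup `F ≤ G`, inside `G^{[2]}`. -/
def edgeGroup2Of (F : Subgroup G) : Subgroup (Quad G) :=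
  Subgroup.closure
    {q : Quad G | ∃ u ∈ F, q = (u, u, 1, 1) ∨ q = (u, 1, u, 1) ∨ q = (u, u, u, u)}

/-- `F^{[2]} = F⁴` as a subgroup of `G^{[2]}`. -/
def quadSub (F : Subgroup G) : Subgroup (Quad G) := F.prod (F.prod (F.prod F))

/-- Faces of the cube `{0,1}³`. -/
def IsFace3 (α : Set Vtx) : Prop := ∃ (i : Fin 3) (b : Bool), α = {v : Vtx | v i = b}

/-- Edges of the cube `{0,1}³`. -/
def IsEdge3 (α : Set Vtx) : Prop :=
  ∃ (i j : Fin 3) (b c : Bool), i ≠ j ∧ α = {v : Vtx | v i = b ∧ v j = c}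

open Classical in
/-- The element `g^{[3,α]}` of `G^{[3]}`, with coordinate `g` on `α` and `1` elsewhere. -/
noncomputable def cubeElt (α : Set Vtx) (g : G) : Cube G :=
  fun v => if v ∈ α then g else 1

variable (G)

/-- The face group `G^{[3,2]}`, generated by the `g^{[3,f]}` for faces `f` of the cube. -/
noncomputable def faceGroup : Subgroup (Cube G) :=
  Subgroup.closure {x : Cube G | ∃ (g : G) (α : Set Vtx), IsFace3 α ∧ x = cubeElt α g}

variable {G}

/-- The edge group `F^{[3,1]}` of a subgroup `F ≤ G`, generated by the `u^{[3,e]}` for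
`u ∈ F` and edges `e` of the cube. -/
noncomputable def edgeGroup3 (F : Subgroup G) : Subgroup (Cube G) :=
  Subgroup.closure {x : Cube G | ∃ u ∈ F, ∃ α : Set Vtx, IsEdge3 α ∧ x = cubeElt α u}

end Groups

/-- The data realizing `(PY, QY)` as the nilparallelepiped structure associated to
`G`, `F`, `Γ` via the coset projection `p : G → Y ≅ G/Γ`. -/
def NilWitness (G : Type) [Group G] (F Γ : Subgroup G) {Y : Type} (p : G → Y)
    (PY : Set (Quad Y)) (QY : Set (Cube Y)) : Prop :=
  commutator G ≤ F ∧ F ≤ Subgroup.center G ∧ Γ ⊓ F = ⊥ ∧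
  Function.Surjective p ∧ (∀ g g' : G, p g = p g' ↔ g⁻¹ * g' ∈ Γ) ∧
  PY = map4 p '' ((edgeGroup2 G : Set (Quad G)) * (quadSub F : Set (Quad G))) ∧
  QY = mapCube p '' ((faceGroup G : Set (Cube G)) * (edgeGroup3 F : Set (Cube G)))

/-- `(PY, QY)` is a nilparallelepiped structure. -/
def IsNilStructure {Y : Type} (PY : Set (Quad Y)) (QY : Set (Cube Y)) : Prop :=
  ∃ (G : Type) (inst : Group G) (F Γ : @Subgroup G inst) (p : G → Y),
    @NilWitness G inst F Γ Y p PY QY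

/-- A splitting of the exact sequence `0 → F → P_s → B → 0` for `s = ⟨a₀, b₀⟩`, encoded
by a lift `ψ : X → 𝒫_s` of a homomorphism section `φ : B → P_s` of `q_s`:
`ψ x` is a parallelogram in `𝒫_s` representing the class `φ(π(x))`. -/
def IsSplittingAt (P : Set (Quad X)) (Q : Set (Cube X)) (i a₀ b₀ : X) : Prop :=
  ∃ ψ : X → Quad X,
    (∀ x, ψ x ∈ P) ∧
    (∀ x, (a₀, b₀, (ψ x).1, (ψ x).2.1) ∈ P) ∧
    (∀ x, ((ψ x).1, (ψ x).2.2.1, i, x) ∈ P) ∧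
    (∀ x y, (i, x, i, y) ∈ P → joinQuad (ψ x) (ψ y) ∈ Q) ∧
    (∀ x1 x2 x3, (x1, x3, i, x2) ∈ P →
      ∃ c d, joinQuad ((ψ x1).2.2.1, (ψ x1).2.2.2, c, d) (ψ x2) ∈ Q ∧
        joinQuad ((ψ x1).1, (ψ x1).2.1, c, d) (ψ x3) ∈ Q)

/-- `(B, c)` is a realization of the base group of the parallelogram structure `P`,
`c x y` realizing the class `⟨x,y⟩`. -/
def IsBaseRealization (P : Set (Quad X)) (B : Type) [AddCommGroup B] (c : X → X → B) : Prop :=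
  (Function.Surjective fun p : X × X => c p.1 p.2) ∧
  (∀ a b a' b' : X, c a b = c a' b' ↔ (a, b, a', b') ∈ P) ∧
  (∀ a b d : X, c a b + c b d = c a d)

/-- `(F, fl)` is a realization of the fiber group of the parallelepiped structure `(P, Q)`:
`fl` maps vertical parallelograms onto `F`, separates exactly the `≈`-classes, and is
additive with respect to the composition of vertical parallelograms. -/
def IsFiberRealization (P : Set (Quad X)) (Q : Set (Cube X)) (i : X) (F : Type)
    [AddCommGroup F] (fl : Quad X → F) : Prop :=
  (∀ u : F, ∃ w, VerticalQ P i w ∧ fl w = u) ∧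
  (∀ w w' : Quad X, VerticalQ P i w → VerticalQ P i w' →
    (fl w = fl w' ↔ joinQuad w w' ∈ Q)) ∧
  (∀ x0 x1 x2 x3 x4 x5 : X, sameFiber P i x0 x1 → sameFiber P i x1 x2 →
    sameFiber P i x2 x3 → sameFiber P i x3 x4 → sameFiber P i x4 x5 →
    fl (x0, x1, x2, x3) + fl (x2, x3, x4, x5) = fl (x0, x1, x4, x5))

/-- A divisible (equivalently, injective) abelian group. -/
def IsDivisibleGroup (F : Type) [AddCommGroup F] : Prop :=
  ∀ (u : F) (n : ℕ), 0 < n → ∃ v : F, n • v = u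

/-- A projective abelian group (projective as a `ℤ`-module). -/
def IsProjectiveAdd (B : Type) [AddCommGroup B] : Prop := Module.Projective ℤ B

theorem IsWeakParallelogram.mem_comm_middle_iff {P : Set (Quad X)} (hP : IsWeakParallelogram P)
    {a b c d : X} : (a, b, c, d) ∈ P ↔ (a, c, b, d) ∈ P :=
  ⟨hP.2.2.2.1 _ _ _ _, hP.2.2.2.1 _ _ _ _⟩

section Base

variable {P : Set (Quad X)} (hP : IsWeakParallelogram P)

theorem cls_eq_cls_iff {a b c d : X} : cls P hP a b = cls P hP c d ↔ (a, b, c, d) ∈ P :=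
  Quotient.eq

theorem cls_eq_cls_iff_cls_eq_cls {a b c d : X} :
    cls P hP a b = cls P hP c d ↔ cls P hP a c = cls P hP b d := by
  rw [cls_eq_cls_iff, cls_eq_cls_iff, hP.mem_comm_middle_iff]

theorem cls_self_eq_cls_self (a b : X) : cls P hP a a = cls P hP b b :=
  (cls_eq_cls_iff hP).2 (hP.mem_comm_middle_iff.1 (hP.1 a b))

theorem mem_iff_cls_eq_cls {a b c d : X} : (a, b, c, d) ∈ P ↔ cls P hP a c = cls P hP b d := by
  rw [← cls_eq_cls_iff_cls_eq_cls, cls_eq_cls_iff]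

theorem cls_eq_cls_iff_cls_eq_cls_self (i b x y : X) :
    cls P hP b x = cls P hP b y ↔ cls P hP x y = cls P hP i i := by
  rw [cls_eq_cls_iff_cls_eq_cls, cls_self_eq_cls_self hP b i, eq_comm]

end Base

theorem same_fiber_tfae_general (X : Type) (P : Set (Quad X))
    (hP : IsWeakParallelogram P) (i x y : X) :
    List.TFAE [
      (x, x, x, y) ∈ P,
      cls P hP i x = cls P hP i y,
      cls P hP x y = cls P hP i i,
      ∀ a b c : X, (a, b, c, x) ∈ P → (a, b, c, y) ∈ P,
      ∃ a b c : X, (a, b, c, x) ∈ P ∧ (a, b, c, y) ∈ P] := by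
  have fiber_iff (b : X) := cls_eq_cls_iff_cls_eq_cls_self hP i b x y
  tfae_have 1 ↔ 3 := (cls_eq_cls_iff hP).symm.trans (fiber_iff x)
  tfae_have 2 ↔ 3 := fiber_iff i
  tfae_have 3 → 4 := by
    intro h a b c hx
    rw [mem_iff_cls_eq_cls hP] at hx ⊢
    rw [hx, (fiber_iff b).2 h]
  tfae_have 4 → 5 := fun h => ⟨x, x, x, hP.1 x x, h x x x (hP.1 x x)⟩
  tfae_have 5 → 3 := by
    rintro ⟨a, b, c, hx, hy⟩
    rw [mem_iff_cls_eq_cls hP] at hx hy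
    exact (fiber_iff b).1 (hx.symm.trans hy)
  tfae_finish

/-- For a weak parallelogram structure with basepoint `i` and
`π(x) = ⟨i,x⟩`, the five characterizations of "`x` and `y` lie in the same fiber"
are equivalent (`1_B` being the class `⟨i,i⟩`). -/
theorem same_fiber_tfae (X : Type) [Nonempty X] (P : Set (Quad X))
    (hP : IsWeakParallelogram P) (i x y : X) :
    List.TFAE [
      (x, x, x, y) ∈ P,
      cls P hP i x = cls P hP i y,
      cls P hP x y = cls P hP i i,
      ∀ a b c : X, (a, b, c, x) ∈ P → (a, b, c, y) ∈ P,
      ∃ a b c : X, (a, b, c, x) ∈ P ∧ (a, b, c, y) ∈ P] :=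
  same_fiber_tfae_general X P hP i x y

end HK
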